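/- Let B be a fusion ring with fusion coefficients N_{j,k}^s and Frobenius–Perron dimensions d(x_j). Then for all indices j_1, j_2, j_3, j_4: Σ_{s=1}^m N_{j_1,j_2}^s N_{j_3,j_4}^s ≤ min over distinct pairs j ≠ j' in {j_1, j_2, j_3, j_4} of d(x_j) d(x_{j'}). -/

import Mathlib

/-!
Write `⟨x_a x_b, x_c x_e⟩ = ∑ₛ N_{a,b}^s N_{c,e}^s`. Frobenius reciprocity and `d(x_s^*) = d(x_s)`
turn `d_j d_k = ∑ₛ N_{j,k}^s d_s` into the three bounds `N_{j,k}^s d_s ≤ d_j d_k`,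
`N_{j,k}^s d_k ≤ d_j d_s`, `N_{j,k}^s d_j ≤ d_s d_k`; adding the last two gives `N_{j,k}^s ≤ d_s`,
hence `⟨x_a x_b, x_c x_e⟩ ≤ d_a d_b` and, symmetrically, `≤ d_c d_e`. Associativity together with
Frobenius reciprocity rotates the pairing, `⟨x_a x_b, x_c x_e⟩ = ⟨x_c^* x_a, x_e x_b^*⟩`, which gives
the bounds `d_a d_c` and `d_b d_e`. The last two pairs `(a, e)` and `(b, c)` follow by Cauchy–Schwarz
from the bounds on `⟨x_a x_b, x_a x_b⟩` and `⟨x_c x_e, x_c x_e⟩`.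
-/

open Finset

namespace FusionRing

variable {ι : Type*} [Fintype ι] {N : ι → ι → ι → ℕ} {σ : ι → ι} {d : ι → ℝ}

/-- `⟨x_a x_b, x_c x_e⟩` for the inner product in which the basis is orthonormal. -/
def pairing (N : ι → ι → ι → ℕ) (a b c e : ι) : ℝ :=
  ∑ s, (N a b s : ℝ) * (N c e s : ℝ)

theorem coeff_mul_dim_le (hd : ∀ j, 0 ≤ d j)
    (hdmul : ∀ j k, d j * d k = ∑ s, (N j k s : ℝ) * d s) (j k s : ι) :
    (N j k s : ℝ) * d s ≤ d j * d k := by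
  rw [hdmul]
  exact single_le_sum (f := fun t => (N j k t : ℝ) * d t)
    (fun t _ => mul_nonneg (Nat.cast_nonneg _) (hd t)) (mem_univ s)

theorem coeff_le_dim (hd : ∀ j, 0 < d j) (hdσ : ∀ j, d (σ j) = d j)
    (hdmul : ∀ j k, d j * d k = ∑ s, (N j k s : ℝ) * d s)
    (hfrob : ∀ j k s, N j k s = N (σ j) s k) (hfrob' : ∀ j k s, N j k s = N s (σ k) j)
    (j k s : ι) : (N j k s : ℝ) ≤ d s := by
  have hd₀ : ∀ j, 0 ≤ d j := fun j => (hd j).le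
  have hk : (N j k s : ℝ) * d k ≤ d j * d s := by
    have := coeff_mul_dim_le hd₀ hdmul (σ j) s k
    rwa [← hfrob, hdσ] at this
  have hj : (N j k s : ℝ) * d j ≤ d s * d k := by
    have := coeff_mul_dim_le hd₀ hdmul s (σ k) j
    rwa [← hfrob', hdσ] at this
  exact le_of_mul_le_mul_right (by linarith) (add_pos (hd j) (hd k))

theorem pairing_comm (a b c e : ι) : pairing N a b c e = pairing N c e a b :=
  sum_congr rfl fun _ _ => mul_comm _ _

theorem pairing_nonneg (a b c e : ι) : 0 ≤ pairing N a b c e :=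
  sum_nonneg fun _ _ => mul_nonneg (Nat.cast_nonneg _) (Nat.cast_nonneg _)

theorem pairing_rotate (hassoc : ∀ j k l s, ∑ t, N j k t * N t l s = ∑ t, N k l t * N j t s)
    (hfrob : ∀ j k s, N j k s = N (σ j) s k) (hfrob' : ∀ j k s, N j k s = N s (σ k) j)
    (a b c e : ι) : pairing N a b c e = pairing N (σ c) a e (σ b) := by
  have h := congrArg (Nat.cast : ℕ → ℝ) (hassoc (σ c) a b e)
  push_cast at h
  calc pairing N a b c e = ∑ s, (N a b s : ℝ) * N (σ c) s e := by
        simp only [pairing, ← hfrob c e]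
    _ = ∑ s, (N (σ c) a s : ℝ) * N s b e := h.symm
    _ = pairing N (σ c) a e (σ b) := by
        simp only [pairing, ← hfrob' _ b e]

theorem pairing_le_left (hN : ∀ j k s, (N j k s : ℝ) ≤ d s)
    (hdmul : ∀ j k, d j * d k = ∑ s, (N j k s : ℝ) * d s) (a b c e : ι) :
    pairing N a b c e ≤ d a * d b := by
  rw [hdmul]
  exact sum_le_sum fun s _ => mul_le_mul_of_nonneg_left (hN c e s) (Nat.cast_nonneg _)

theorem pairing_le_right (hN : ∀ j k s, (N j k s : ℝ) ≤ d s)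
    (hdmul : ∀ j k, d j * d k = ∑ s, (N j k s : ℝ) * d s) (a b c e : ι) :
    pairing N a b c e ≤ d c * d e :=
  pairing_comm (N := N) a b c e ▸ pairing_le_left hN hdmul c e a b

theorem pairing_le_of_le_mul_self {a b c e : ι} {x y : ℝ} (hx : 0 ≤ x) (hy : 0 ≤ y)
    (hab : pairing N a b a b ≤ x * x) (hce : pairing N c e c e ≤ y * y) :
    pairing N a b c e ≤ x * y := by
  have hsq : pairing N a b c e ^ 2 ≤ (x * y) ^ 2 := calc
    _ ≤ pairing N a b a b * pairing N c e c e := by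
        simpa only [pairing, sq] using sum_mul_sq_le_sq_mul_sq univ
          (fun s => (N a b s : ℝ)) (fun s => (N c e s : ℝ))
    _ ≤ (x * x) * (y * y) := mul_le_mul hab hce (pairing_nonneg c e c e) (mul_self_nonneg x)
    _ = (x * y) ^ 2 := by ring
  exact (le_abs_self _).trans (abs_le_of_sq_le_sq hsq (mul_nonneg hx hy))

theorem pairing_le_first_third (hN : ∀ j k s, (N j k s : ℝ) ≤ d s)
    (hdσ : ∀ j, d (σ j) = d j) (hdmul : ∀ j k, d j * d k = ∑ s, (N j k s : ℝ) * d s)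
    (hrot : ∀ a b c e, pairing N a b c e = pairing N (σ c) a e (σ b)) (a b c e : ι) :
    pairing N a b c e ≤ d a * d c := by
  rw [hrot, mul_comm, ← hdσ c]
  exact pairing_le_left hN hdmul _ _ _ _

theorem pairing_le_second_fourth (hN : ∀ j k s, (N j k s : ℝ) ≤ d s)
    (hdσ : ∀ j, d (σ j) = d j) (hdmul : ∀ j k, d j * d k = ∑ s, (N j k s : ℝ) * d s)
    (hrot : ∀ a b c e, pairing N a b c e = pairing N (σ c) a e (σ b)) (a b c e : ι) :
    pairing N a b c e ≤ d b * d e := by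
  rw [hrot, mul_comm, ← hdσ b]
  exact pairing_le_right hN hdmul _ _ _ _

end FusionRing

open FusionRing in
theorem fusion_ring_pairing_bound_general
    (m : ℕ)
    (N : Fin m → Fin m → Fin m → ℕ)
    (σ : Fin m → Fin m)
    (hassoc : ∀ j k l s, ∑ t, N j k t * N t l s = ∑ t, N k l t * N j t s)
    (hfrob : ∀ j k s, N j k s = N (σ j) s k)
    (hfrob' : ∀ j k s, N j k s = N s (σ k) j)
    (d : Fin m → ℝ) (hd1 : ∀ j, 1 ≤ d j) (hdσ : ∀ j, d (σ j) = d j)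
    (hdmul : ∀ j k, d j * d k = ∑ s, (N j k s : ℝ) * d s)
    (j₁ j₂ j₃ j₄ : Fin m) :
    ∀ a b : Fin 4, a ≠ b →
      (∑ s, (N j₁ j₂ s : ℝ) * (N j₃ j₄ s : ℝ))
        ≤ d ((![j₁, j₂, j₃, j₄] : Fin 4 → Fin m) a)
          * d ((![j₁, j₂, j₃, j₄] : Fin 4 → Fin m) b) := by
  have hN := coeff_le_dim (fun j => one_pos.trans_le (hd1 j)) hdσ hdmul hfrob hfrob'
  have hrot := pairing_rotate hassoc hfrob hfrob'
  have h₁₂ := pairing_le_left hN hdmul j₁ j₂ j₃ j₄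
  have h₃₄ := pairing_le_right hN hdmul j₁ j₂ j₃ j₄
  have h₁₃ := pairing_le_first_third hN hdσ hdmul hrot j₁ j₂ j₃ j₄
  have h₂₄ := pairing_le_second_fourth hN hdσ hdmul hrot j₁ j₂ j₃ j₄
  have hd₀ : ∀ j, 0 ≤ d j := fun j => zero_le_one.trans (hd1 j)
  have h₁₄ : pairing N j₁ j₂ j₃ j₄ ≤ d j₁ * d j₄ := pairing_le_of_le_mul_self (hd₀ _) (hd₀ _)
    (pairing_le_first_third hN hdσ hdmul hrot _ _ _ _)
    (pairing_le_second_fourth hN hdσ hdmul hrot _ _ _ _)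
  have h₂₃ : pairing N j₁ j₂ j₃ j₄ ≤ d j₂ * d j₃ := pairing_le_of_le_mul_self (hd₀ _) (hd₀ _)
    (pairing_le_second_fourth hN hdσ hdmul hrot _ _ _ _)
    (pairing_le_first_third hN hdσ hdmul hrot _ _ _ _)
  intro a b hab
  change pairing N j₁ j₂ j₃ j₄ ≤ _
  fin_cases a <;> fin_cases b <;> simp only [ne_eq, not_true_eq_false, Fin.reduceFinMk, Matrix.cons_val] at hab ⊢ <;>
    first | assumption | (rw [mul_comm]; assumption)

/-- in a fusion ring, for all indices `j₁, j₂, j₃, j₄`,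
`Σ_s N_{j₁,j₂}^s N_{j₃,j₄}^s ≤ d(x_j) d(x_{j'})` for every pair of distinct
positions `j ≠ j'` among `{j₁, j₂, j₃, j₄}` (hence ≤ the minimum over such pairs). -/
theorem fusion_ring_pairing_bound
    (m : ℕ) (hm : 0 < m)
    (N : Fin m → Fin m → Fin m → ℕ)
    (σ : Fin m → Fin m) (hσ : ∀ j, σ (σ j) = j)
    (hunit : ∀ k s, N ⟨0, hm⟩ k s = if k = s then 1 else 0)
    (hunit' : ∀ j s, N j ⟨0, hm⟩ s = if j = s then 1 else 0)
    (hdual : ∀ j k, N j k ⟨0, hm⟩ = if j = σ k then 1 else 0)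
    (hassoc : ∀ j k l s, ∑ t, N j k t * N t l s = ∑ t, N k l t * N j t s)
    (hfrob : ∀ j k s, N j k s = N (σ j) s k)
    (hfrob' : ∀ j k s, N j k s = N s (σ k) j)
    (d : Fin m → ℝ) (hd1 : ∀ j, 1 ≤ d j) (hdσ : ∀ j, d (σ j) = d j)
    (hdmul : ∀ j k, d j * d k = ∑ s, (N j k s : ℝ) * d s)
    (j₁ j₂ j₃ j₄ : Fin m) :
    ∀ a b : Fin 4, a ≠ b →
      (∑ s, (N j₁ j₂ s : ℝ) * (N j₃ j₄ s : ℝ))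
        ≤ d ((![j₁, j₂, j₃, j₄] : Fin 4 → Fin m) a)
          * d ((![j₁, j₂, j₃, j₄] : Fin 4 → Fin m) b) :=
  fusion_ring_pairing_bound_general m N σ hassoc hfrob hfrob' d hd1 hdσ hdmul j₁ j₂ j₃ j₄
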